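/- arXiv:2101.10938 — 2 statements merged into one kernel-verified Lean document; each statement's English description precedes it below -/
import Mathlib

section
/- Let V be a finite-dimensional vector space over ℚ, V_ℂ = V ⊗_ℚ ℂ its complexification, and σ : V_ℂ → V_ℂ the complex conjugation (the ℂ-antilinear involution with σ(v ⊗ z) = v ⊗ z̄). Fix n ∈ ℤ. A finite exhaustive separated decreasing filtration F^• of V_ℂ by ℂ-subspaces satisfies V_ℂ = F^p V_ℂ ⊕ σ(F^{n+1-p} V_ℂ) for every p ∈ ℤ if and only if there exists a direct sum decomposition V_ℂ = ⊕_{p+q=n} V^{p,q} into ℂ-subspaces with σ(V^{q,p}) = V^{p,q} for all p,q with p+q=n and F^p V_ℂ = ⊕_{p'≥p} V^{p',n-p'} for all p; moreover in that case the decomposition is unique and is given by V^{p,q} = F^p V_ℂ ∩ σ(F^q V_ℂ). -/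
/-!
Conjugation of subspaces is an involutive automorphism `c` of the lattice of ℂ-subspaces of
`V_ℂ`, and the statement is pure lattice theory in a modular lattice. If
`F^p ⊕ c F^{n+1-p} = V_ℂ` for all `p`, then the modular law applied to
`F^{p+1} ⊕ c F^{n-p} = V_ℂ` splits `F^p = (F^p ∩ c F^{n-p}) ⊕ F^{p+1}`, so descending induction
from the top of the filtration writes `F^p` as the sum of the pieces `F^{p'} ∩ c F^{n-p'}`,
`p' ≥ p`; the same two complements make the pieces independent. Conversely, a
conjugation-symmetric decomposition turns `c F^{n+1-p}` into the sum of the pieces of index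
`< p`, which is complementary to the sum of those of index `≥ p`. For uniqueness, any
decomposition piece `V^p ≤ c F^{n-p}` satisfies, again by the modular law,
`F^p ∩ c F^{n-p} = V^p ⊕ (F^{p+1} ∩ c F^{n-p}) = V^p`.
-/

open TensorProduct

/-- Complex conjugation on the complexification `ℂ ⊗[ℚ] V`, acting as
`z ⊗ v ↦ z̄ ⊗ v`; it is ℚ-linear (indeed ℂ-antilinear) and fixes `V ⊗ 1`. -/
noncomputable def sigma (V : Type) [AddCommGroup V] [Module ℚ V] :
    (ℂ ⊗[ℚ] V) →ₗ[ℚ] (ℂ ⊗[ℚ] V) :=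
  TensorProduct.map ((starRingEnd ℂ).toRatAlgHom.toLinearMap) LinearMap.id

/-- `Vpq` is a Hodge decomposition of weight `n` adapted to the filtration `F`:
the family `Vpq p` (representing `V^{p, n-p}`) is an internal direct sum
decomposition of `V_ℂ`, is exchanged by conjugation (`σ(V^{q,p}) = V^{p,q}`,
i.e. `σ (Vpq (n-p)) = Vpq p`), and `F^p = ⊕_{p' ≥ p} V^{p', n-p'}`. -/
def IsHodgeDecompOf (V : Type) [AddCommGroup V] [Module ℚ V]
    (n : ℤ) (F Vpq : ℤ → Submodule ℂ (ℂ ⊗[ℚ] V)) : Prop :=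
  DirectSum.IsInternal Vpq ∧
  (∀ p : ℤ, Submodule.map (sigma V) ((Vpq (n - p)).restrictScalars ℚ) =
      (Vpq p).restrictScalars ℚ) ∧
  (∀ p : ℤ, F p = ⨆ p' ≥ p, Vpq p')

open Function

section Filtration

variable {α : Type*} [CompleteLattice α]

theorem biSup_ge_eq_sup_biSup_ge_add_one (f : ℤ → α) (p : ℤ) :
    ⨆ q ≥ p, f q = f p ⊔ ⨆ q ≥ p + 1, f q := by
  have hIci : Set.Ici p = insert p (Set.Ici (p + 1)) := by
    ext q
    simp only [Set.mem_Ici, Set.mem_insert_iff]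
    omega
  have h := iSup_insert (f := f) (s := Set.Ici (p + 1)) (b := p)
  rw [← hIci] at h
  exact h

theorem eq_biSup_ge_of_eq_sup_add_one {F V : ℤ → α} {b : ℤ} (hb : ∀ p, b ≤ p → F p = ⊥)
    (hstep : ∀ p, F p = V p ⊔ F (p + 1)) (p : ℤ) : F p = ⨆ q ≥ p, V q := by
  have hbase : ∀ p, b ≤ p → F p = ⨆ q ≥ p, V q := fun p hp =>
    (hb p hp).trans (le_antisymm bot_le (iSup₂_le fun q hq =>
      (hb q (hp.trans hq) ▸ hstep q).ge.trans' le_sup_left))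
  induction p using Int.inductionOn' (b := b) with
  | zero => exact hbase b le_rfl
  | succ k hk _ => exact hbase (k + 1) (by omega)
  | pred k _ ih =>
    rw [hstep, sub_add_cancel, ih, biSup_ge_eq_sup_biSup_ge_add_one _ (k - 1), sub_add_cancel]

end Filtration

section Conjugation

variable {α : Type*} [CompleteLattice α] (c : α ≃o α) (n : ℤ) (F : ℤ → α)

def IsHodgeFiltration : Prop :=
  ∀ p, IsCompl (F p) (c (F (n + 1 - p)))

def hodgePiece (p : ℤ) : α :=
  F p ⊓ c (F (n - p))

def IsHodgeDecomposition (V : ℤ → α) : Prop :=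
  iSupIndep V ∧ iSup V = ⊤ ∧ (∀ p, c (V (n - p)) = V p) ∧ ∀ p, F p = ⨆ q ≥ p, V q

variable {c n F}

theorem hodgePiece_conj (hc : Involutive c) (p : ℤ) :
    c (hodgePiece c n F (n - p)) = hodgePiece c n F p := by
  rw [hodgePiece, map_inf, hc, sub_sub_cancel, hodgePiece, inf_comm]

namespace IsHodgeFiltration

variable (hF : IsHodgeFiltration c n F)
include hF

theorem disjoint_succ (p : ℤ) : Disjoint (F (p + 1)) (c (F (n - p))) := by
  simpa only [add_sub_add_right_eq_sub] using (hF (p + 1)).disjoint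

variable [IsModularLattice α]

theorem hodgePiece_sup_succ (hanti : Antitone F) (p : ℤ) :
    hodgePiece c n F p ⊔ F (p + 1) = F p := by
  have hcod : Codisjoint (F (p + 1)) (c (F (n - p))) := by
    simpa only [add_sub_add_right_eq_sub] using (hF (p + 1)).codisjoint
  calc hodgePiece c n F p ⊔ F (p + 1) = F (p + 1) ⊔ c (F (n - p)) ⊓ F p := by
        rw [hodgePiece, sup_comm, inf_comm]
    _ = (F (p + 1) ⊔ c (F (n - p))) ⊓ F p := (sup_inf_assoc_of_le _ (hanti (by omega))).symm
    _ = F p := by rw [hcod.eq_top, top_inf_eq]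

theorem iSupIndep_hodgePiece (hanti : Antitone F) : iSupIndep (hodgePiece c n F) := by
  intro p
  have hle : ⨆ q ≠ p, hodgePiece c n F q ≤ F (p + 1) ⊔ c (F (n + 1 - p)) :=
    iSup₂_le fun q hq => by
      rcases hq.lt_or_gt with h | h
      · exact le_sup_of_le_right (inf_le_right.trans (c.monotone (hanti (by omega))))
      · exact le_sup_of_le_left (inf_le_left.trans (hanti (by omega)))
  refine Disjoint.mono_right hle (Disjoint.disjoint_sup_right_of_disjoint_sup_left ?_ ?_)
  · exact (hF.disjoint_succ p).symm.mono_left inf_le_right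
  · exact (hF.hodgePiece_sup_succ hanti p).symm ▸ (hF p).disjoint

theorem eq_biSup_hodgePiece (hanti : Antitone F) {b : ℤ} (hb : ∀ p, b ≤ p → F p = ⊥) (p : ℤ) :
    F p = ⨆ q ≥ p, hodgePiece c n F q :=
  eq_biSup_ge_of_eq_sup_add_one hb (fun p => (hF.hodgePiece_sup_succ hanti p).symm) p

theorem isHodgeDecomposition_hodgePiece (hc : Involutive c) (hanti : Antitone F)
    (ha : ∃ a, ∀ p ≤ a, F p = ⊤) (hb : ∃ b, ∀ p, b ≤ p → F p = ⊥) :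
    IsHodgeDecomposition c n F (hodgePiece c n F) := by
  obtain ⟨a, ha⟩ := ha
  obtain ⟨b, hb⟩ := hb
  refine ⟨hF.iSupIndep_hodgePiece hanti, eq_top_iff.2 ?_, hodgePiece_conj hc,
    hF.eq_biSup_hodgePiece hanti hb⟩
  rw [← ha a le_rfl, hF.eq_biSup_hodgePiece hanti hb a]
  exact iSup₂_le fun q _ => le_iSup _ q

theorem eq_hodgePiece {V : ℤ → α} (hV : IsHodgeDecomposition c n F V) (p : ℤ) :
    V p = hodgePiece c n F p := by
  obtain ⟨-, -, hVc, hFV⟩ := hV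
  have hVF : ∀ q, V q ≤ F q := fun q => (hFV q).ge.trans' (le_iSup₂_of_le q le_rfl le_rfl)
  have hVcF : V p ≤ c (F (n - p)) := hVc p ▸ c.monotone (hVF _)
  have hsplit : F p = V p ⊔ F (p + 1) := by
    rw [hFV, hFV, biSup_ge_eq_sup_biSup_ge_add_one]
  refine le_antisymm (le_inf (hVF p) hVcF) (le_of_eq ?_)
  calc hodgePiece c n F p = (V p ⊔ F (p + 1)) ⊓ c (F (n - p)) := by rw [hodgePiece, ← hsplit]
    _ = V p ⊔ F (p + 1) ⊓ c (F (n - p)) := sup_inf_assoc_of_le _ hVcF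
    _ = V p := by rw [(hF.disjoint_succ p).eq_bot, sup_bot_eq]

end IsHodgeFiltration

variable [IsModularLattice α]

theorem IsHodgeDecomposition.isHodgeFiltration [IsCompactlyGenerated α] {V : ℤ → α}
    (hV : IsHodgeDecomposition c n F V) : IsHodgeFiltration c n F := by
  obtain ⟨hind, htop, hVc, hFV⟩ := hV
  intro p
  have hcV : ∀ q, c (V q) = V (n - q) := fun q => by rw [← hVc (n - q), sub_sub_cancel]
  have hconj : c (F (n + 1 - p)) = ⨆ q ∈ Set.Iio p, V q := by
    rw [hFV, map_iSup₂]
    apply le_antisymm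
    · exact iSup₂_le fun q hq => le_iSup₂_of_le (n - q) (by simp only [Set.mem_Iio]; omega)
        (hcV q).le
    · exact iSup₂_le fun q hq => le_iSup₂_of_le (n - q) (by rw [Set.mem_Iio] at hq; omega)
        (by rw [hcV, sub_sub_cancel])
  rw [hconj, hFV]
  refine ⟨hind.disjoint_biSup_biSup (Set.Iio_disjoint_Ici le_rfl).symm, codisjoint_iff.2 ?_⟩
  show (⨆ q ∈ Set.Ici p, V q) ⊔ ⨆ q ∈ Set.Iio p, V q = ⊤
  rw [sup_comm, ← iSup_union, Set.Iio_union_Ici, iSup_univ, htop]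

theorem isHodgeFiltration_iff [IsCompactlyGenerated α] (hc : Involutive c) (hanti : Antitone F)
    (ha : ∃ a, ∀ p ≤ a, F p = ⊤) (hb : ∃ b, ∀ p, b ≤ p → F p = ⊥) :
    IsHodgeFiltration c n F ↔
      (∃ V, IsHodgeDecomposition c n F V) ∧
        ∀ V, IsHodgeDecomposition c n F V → ∀ p, V p = hodgePiece c n F p :=
  ⟨fun hF => ⟨⟨_, hF.isHodgeDecomposition_hodgePiece hc hanti ha hb⟩,
      fun _ hV => hF.eq_hodgePiece hV⟩,
    fun ⟨⟨_, hV⟩, _⟩ => hV.isHodgeFiltration⟩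

end Conjugation

section Complexification

variable (V : Type) [AddCommGroup V] [Module ℚ V]

theorem sigma_sigma (x : ℂ ⊗[ℚ] V) : sigma V (sigma V x) = x := by
  induction x using TensorProduct.induction_on with
  | zero => simp
  | tmul z v => simp [sigma]
  | add x y hx hy => rw [map_add, map_add, hx, hy]

theorem sigma_smul (z : ℂ) (x : ℂ ⊗[ℚ] V) :
    sigma V (z • x) = starRingEnd ℂ z • sigma V x := by
  induction x using TensorProduct.induction_on with
  | zero => simp
  | tmul w v => simp [sigma, TensorProduct.smul_tmul']
  | add x y hx hy => rw [smul_add, map_add, hx, hy, map_add, smul_add]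

noncomputable def conjEquiv : (ℂ ⊗[ℚ] V) ≃ₛₗ[starRingEnd ℂ] (ℂ ⊗[ℚ] V) :=
  LinearEquiv.ofInvolutive
    { toFun := sigma V, map_add' := map_add (sigma V), map_smul' := sigma_smul V }
    (sigma_sigma V)

noncomputable def conjSubmodule : Submodule ℂ (ℂ ⊗[ℚ] V) ≃o Submodule ℂ (ℂ ⊗[ℚ] V) :=
  Submodule.orderIsoMapComap (conjEquiv V)

theorem restrictScalars_conjSubmodule (W : Submodule ℂ (ℂ ⊗[ℚ] V)) :
    (conjSubmodule V W).restrictScalars ℚ = (W.restrictScalars ℚ).map (sigma V) :=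
  rfl

theorem conjSubmodule_involutive : Involutive (conjSubmodule V) := fun W => by
  ext x
  simp only [conjSubmodule, Submodule.orderIsoMapComap_apply, Submodule.mem_map_equiv]
  change sigma V (sigma V x) ∈ W ↔ x ∈ W
  rw [sigma_sigma]

variable {V}

theorem isHodgeDecompOf_iff {n : ℤ} {F Vpq : ℤ → Submodule ℂ (ℂ ⊗[ℚ] V)} :
    IsHodgeDecompOf V n F Vpq ↔ IsHodgeDecomposition (conjSubmodule V) n F Vpq := by
  simp only [IsHodgeDecompOf, IsHodgeDecomposition,
    DirectSum.isInternal_submodule_iff_iSupIndep_and_iSup_eq_top, ← restrictScalars_conjSubmodule,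
    Submodule.restrictScalars_inj, and_assoc]

end Complexification

theorem pure_hodge_structure_iff_hodge_decomposition_general
    (V : Type) [AddCommGroup V] [Module ℚ V]
    (n : ℤ) (F : ℤ → Submodule ℂ (ℂ ⊗[ℚ] V))
    (hdec : Antitone F)
    (hexh : ∃ a : ℤ, ∀ p ≤ a, F p = ⊤)
    (hsep : ∃ b : ℤ, ∀ p : ℤ, b ≤ p → F p = ⊥) :
    (∀ p : ℤ, IsCompl ((F p).restrictScalars ℚ)
        (Submodule.map (sigma V) ((F (n + 1 - p)).restrictScalars ℚ))) ↔
      ((∃ Vpq : ℤ → Submodule ℂ (ℂ ⊗[ℚ] V), IsHodgeDecompOf V n F Vpq) ∧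
        ∀ Vpq : ℤ → Submodule ℂ (ℂ ⊗[ℚ] V), IsHodgeDecompOf V n F Vpq →
          ∀ p : ℤ, (Vpq p).restrictScalars ℚ =
            (F p).restrictScalars ℚ ⊓
              Submodule.map (sigma V) ((F (n - p)).restrictScalars ℚ)) := by
  simp only [← restrictScalars_conjSubmodule, Submodule.isCompl_restrictScalars_iff,
    ← Submodule.restrictScalars_inf, Submodule.restrictScalars_inj, isHodgeDecompOf_iff]
  exact isHodgeFiltration_iff (conjSubmodule_involutive V) hdec hexh hsep

theorem pure_hodge_structure_iff_hodge_decomposition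
    (V : Type) [AddCommGroup V] [Module ℚ V] [FiniteDimensional ℚ V]
    (n : ℤ) (F : ℤ → Submodule ℂ (ℂ ⊗[ℚ] V))
    (hdec : Antitone F)
    (hexh : ∃ a : ℤ, ∀ p ≤ a, F p = ⊤)
    (hsep : ∃ b : ℤ, ∀ p : ℤ, b ≤ p → F p = ⊥) :
    (∀ p : ℤ, IsCompl ((F p).restrictScalars ℚ)
        (Submodule.map (sigma V) ((F (n + 1 - p)).restrictScalars ℚ))) ↔
      ((∃ Vpq : ℤ → Submodule ℂ (ℂ ⊗[ℚ] V), IsHodgeDecompOf V n F Vpq) ∧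
        ∀ Vpq : ℤ → Submodule ℂ (ℂ ⊗[ℚ] V), IsHodgeDecompOf V n F Vpq →
          ∀ p : ℤ, (Vpq p).restrictScalars ℚ =
            (F p).restrictScalars ℚ ⊓
              Submodule.map (sigma V) ((F (n - p)).restrictScalars ℚ)) :=
  pure_hodge_structure_iff_hodge_decomposition_general V n F hdec hexh hsep
end

section
/- Let n ≥ 1 be an integer and M ≥ 1 a real number. Then there exists a constant c > 0, depending only on n and M, with the following property: for every connected subset A ⊆ ℝⁿ such that the set {γ ∈ ℤⁿ : (γ + (−M, M)ⁿ) ∩ A ≠ ∅} is infinite, there exists T₀ > 0 (depending on A) such that for every T ≥ T₀ the number of lattice points γ ∈ ℤⁿ with ‖γ‖ ≤ T and (γ + (−M, M)ⁿ) ∩ A ≠ ∅ is at least c·T. -/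
/-!
STATEMENT 6: For `n ≥ 1` and `M ≥ 1` there is a constant `c > 0` (depending
only on `n` and `M`) such that: for every connected `A ⊆ ℝⁿ` meeting
infinitely many translates `γ + (−M, M)ⁿ` (`γ ∈ ℤⁿ`) of the open cube, there
is `T₀ > 0` such that for all `T ≥ T₀`, at least `c·T` lattice points
`γ ∈ ℤⁿ` with `‖γ‖ ≤ T` satisfy `(γ + (−M, M)ⁿ) ∩ A ≠ ∅`. -/

/-- A lattice point `γ ∈ ℤⁿ`, viewed in Euclidean `n`-space. -/
noncomputable def latticePt (n : ℕ) (γ : Fin n → ℤ) : EuclideanSpace ℝ (Fin n) :=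
  WithLp.toLp 2 (fun i => (γ i : ℝ))

/-- `(γ + (−M, M)ⁿ) ∩ A ≠ ∅`: the translate by `γ` of the open cube of side
`2M` centered at the origin meets `A`. -/
def cubeMeets (n : ℕ) (M : ℝ) (γ : Fin n → ℤ) (A : Set (EuclideanSpace ℝ (Fin n))) : Prop :=
  ∃ x ∈ A, ∀ i : Fin n, |x i - (γ i : ℝ)| < M

/-! Because the cubes have side greater than `1`, rounding a point of `A` coordinatewise gives a
cube meeting `A` whose centre lies within `√n / 2` of that point. Meeting cubes arbitrarily far
out, `A` is unbounded; being connected, its set of norms then contains a ray `[‖a‖, ∞)`. Rounding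
points of `A` of norms `‖a‖ + (√n + 1) k` gives lattice points of strictly increasing norm, and
about `T / (2 (√n + 1))` of them lie in the ball of radius `T`. -/

open Set

theorem IsPreconnected.exists_norm_eq {E : Type*} [SeminormedAddCommGroup E] {A : Set E}
    (hA : IsPreconnected A) (hA_unbdd : ¬Bornology.IsBounded A) {a : E} (ha : a ∈ A) {r : ℝ}
    (hr : ‖a‖ ≤ r) : ∃ y ∈ A, ‖y‖ = r := by
  obtain ⟨x, hx, hrx⟩ : ∃ x ∈ A, r ≤ ‖x‖ := by
    by_contra! h
    exact hA_unbdd (isBounded_iff_forall_norm_le.2 ⟨r, fun x hx => (h x hx).le⟩)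
  exact hA.intermediate_value ha hx continuous_norm.continuousOn ⟨hr, hrx⟩

theorem strictMono_of_abs_sub_affine_le {u : ℕ → ℝ} {b D s : ℝ} (hsD : 2 * s < D)
    (hu : ∀ k : ℕ, |u k - (b + D * k)| ≤ s) : StrictMono u :=
  strictMono_nat_of_lt_succ fun k => by
    have hk := abs_le.1 (hu k)
    have hk₁ := abs_le.1 (hu (k + 1))
    push_cast at hk₁
    linarith [hk.2, hk₁.1]

section Lattice

variable {n : ℕ}

@[simp]
theorem latticePt_apply (γ : Fin n → ℤ) (i : Fin n) : latticePt n γ i = γ i := rfl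

theorem finite_setOf_norm_latticePt_le (T : ℝ) : {γ : Fin n → ℤ | ‖latticePt n γ‖ ≤ T}.Finite := by
  refine (Set.Finite.pi' fun _ => Set.finite_Icc (-⌊T⌋) ⌊T⌋).subset fun γ hγ i => ?_
  have hγi : |(γ i : ℝ)| ≤ T := by
    simpa using (PiLp.norm_apply_le (latticePt n γ) i).trans hγ
  constructor
  · rw [neg_le, Int.le_floor, Int.cast_neg]
    linarith [neg_abs_le (γ i : ℝ)]
  · rw [Int.le_floor]
    exact (le_abs_self _).trans hγi

theorem norm_le_sqrt_mul_of_forall_abs_le {x : EuclideanSpace ℝ (Fin n)} {C : ℝ} (hC : 0 ≤ C)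
    (hx : ∀ i, |x i| ≤ C) : ‖x‖ ≤ √n * C := by
  rw [EuclideanSpace.norm_eq, ← Real.sqrt_sq hC, ← Real.sqrt_mul (Nat.cast_nonneg n)]
  refine Real.sqrt_le_sqrt ?_
  simpa using Finset.sum_le_sum (s := Finset.univ) fun i _ => sq_le_sq' (abs_le.1 (hx i)).1 (abs_le.1 (hx i)).2

noncomputable def roundPt (x : EuclideanSpace ℝ (Fin n)) : Fin n → ℤ := fun i => round (x i)

theorem norm_sub_latticePt_roundPt_le (x : EuclideanSpace ℝ (Fin n)) :
    ‖x - latticePt n (roundPt x)‖ ≤ √n / 2 := by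
  rw [div_eq_mul_one_div]
  exact norm_le_sqrt_mul_of_forall_abs_le (by norm_num) fun i => by
    simpa [roundPt] using abs_sub_round (x i)

theorem cubeMeets_roundPt {M : ℝ} (hM : 1 / 2 < M) {A : Set (EuclideanSpace ℝ (Fin n))}
    {x : EuclideanSpace ℝ (Fin n)} (hx : x ∈ A) : cubeMeets n M (roundPt x) A :=
  ⟨x, hx, fun i => (abs_sub_round (x i)).trans_lt hM⟩

theorem not_isBounded_of_infinite_cubeMeets {M : ℝ} (hM : 0 ≤ M)
    {A : Set (EuclideanSpace ℝ (Fin n))} (hA : {γ | cubeMeets n M γ A}.Infinite) :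
    ¬Bornology.IsBounded A := by
  rintro hA_bdd
  obtain ⟨R, hR⟩ := isBounded_iff_forall_norm_le.1 hA_bdd
  refine hA ((finite_setOf_norm_latticePt_le (R + √n * M)).subset ?_)
  rintro γ ⟨x, hx, hxγ⟩
  have hdist : ‖x - latticePt n γ‖ ≤ √n * M :=
    norm_le_sqrt_mul_of_forall_abs_le hM fun i => by simpa using (hxγ i).le
  calc ‖latticePt n γ‖ ≤ ‖x‖ + ‖x - latticePt n γ‖ := norm_le_norm_add_norm_sub _ _
    _ ≤ R + √n * M := add_le_add (hR x hx) hdist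

theorem exists_cubeMeets_seq_norm_near_affine {M : ℝ} (hM : 1 / 2 < M)
    {A : Set (EuclideanSpace ℝ (Fin n))} (hA : IsConnected A)
    (hA_inf : {γ | cubeMeets n M γ A}.Infinite) {D : ℝ} (hD : 0 ≤ D) :
    ∃ b : ℝ, 0 ≤ b ∧ ∃ g : ℕ → Fin n → ℤ, ∀ k : ℕ,
      cubeMeets n M (g k) A ∧ |‖latticePt n (g k)‖ - (b + D * k)| ≤ √n / 2 := by
  obtain ⟨a, ha⟩ := hA.nonempty
  have hA_unbdd := not_isBounded_of_infinite_cubeMeets (by linarith) hA_inf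
  have hy (k : ℕ) : ∃ y ∈ A, ‖y‖ = ‖a‖ + D * k :=
    hA.isPreconnected.exists_norm_eq hA_unbdd ha (le_add_of_nonneg_right (by positivity))
  choose y hyA hy_norm using hy
  refine ⟨‖a‖, norm_nonneg a, fun k => roundPt (y k), fun k => ⟨cubeMeets_roundPt hM (hyA k), ?_⟩⟩
  rw [← hy_norm k, abs_sub_comm]
  exact (abs_norm_sub_norm_le _ _).trans (norm_sub_latticePt_roundPt_le _)

end Lattice

theorem connected_set_meets_linearly_many_cubes_general
    (n : ℕ) (M : ℝ) (hM : 1 ≤ M) :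
    ∃ c : ℝ, 0 < c ∧
      ∀ A : Set (EuclideanSpace ℝ (Fin n)), IsConnected A →
        {γ : Fin n → ℤ | cubeMeets n M γ A}.Infinite →
        ∃ T₀ : ℝ, 0 < T₀ ∧ ∀ T : ℝ, T₀ ≤ T →
          c * T ≤
            ({γ : Fin n → ℤ | ‖latticePt n γ‖ ≤ T ∧ cubeMeets n M γ A}).ncard := by
  set D := √n + 1
  have hD : 0 < D := by positivity
  refine ⟨1 / (2 * D), by positivity, fun A hA hA_inf => ?_⟩
  obtain ⟨b, hb, g, hg⟩ := exists_cubeMeets_seq_norm_near_affine (by linarith) hA hA_inf hD.le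
  have hg_mono : StrictMono fun k => ‖latticePt n (g k)‖ :=
    strictMono_of_abs_sub_affine_le (by linarith) fun k => (hg k).2
  have hg_inj : Function.Injective g := hg_mono.injective.of_comp (f := fun γ => ‖latticePt n γ‖)
  refine ⟨2 * (b + √n / 2) + 1, by positivity, fun T hT => ?_⟩
  set S := {γ : Fin n → ℤ | ‖latticePt n γ‖ ≤ T ∧ cubeMeets n M γ A}
  have hg_mem : ∀ k ∈ Iio ⌈1 / (2 * D) * T⌉₊, g k ∈ S := by
    intro k hk
    have hkT := Nat.lt_ceil.1 hk
    rw [one_div_mul_eq_div, lt_div_iff₀ (by positivity)] at hkT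
    have hgk := abs_le.1 (hg k).2
    exact ⟨by nlinarith, (hg k).1⟩
  have hS : S.Finite := (finite_setOf_norm_latticePt_le T).subset fun _ h => h.1
  calc 1 / (2 * D) * T ≤ ⌈1 / (2 * D) * T⌉₊ := Nat.le_ceil _
    _ ≤ S.ncard := by
      exact_mod_cast (ncard_Iio_nat _).symm.le.trans
        (ncard_le_ncard_of_injOn g hg_mem hg_inj.injOn hS)

theorem connected_set_meets_linearly_many_cubes
    (n : ℕ) (hn : 1 ≤ n) (M : ℝ) (hM : 1 ≤ M) :
    ∃ c : ℝ, 0 < c ∧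
      ∀ A : Set (EuclideanSpace ℝ (Fin n)), IsConnected A →
        {γ : Fin n → ℤ | cubeMeets n M γ A}.Infinite →
        ∃ T₀ : ℝ, 0 < T₀ ∧ ∀ T : ℝ, T₀ ≤ T →
          c * T ≤
            ({γ : Fin n → ℤ | ‖latticePt n γ‖ ≤ T ∧ cubeMeets n M γ A}).ncard :=
  connected_set_meets_linearly_many_cubes_general n M hM
end
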